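/- Reachability under sink firing is an equivalence relation on the set of acyclic edge orientations of a finite graph. -/

import Mathlib

/-- An edge orientation of a simple graph `G`: each edge gets exactly one direction. -/
structure EdgeOrientation {V : Type*} (G : SimpleGraph V) where
  dir : V → V → Prop
  dir_adj : ∀ u v, dir u v → G.Adj u v
  dir_total : ∀ u v, G.Adj u v → (dir u v ↔ ¬ dir v u)

namespace EdgeOrientation

variable {V : Type*} {G : SimpleGraph V}

/-- An orientation is acyclic if it admits no directed cycle. -/
def Acyclic (o : EdgeOrientation G) : Prop :=
  ∀ v, ¬ Relation.TransGen o.dir v v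

/-- A sink is a vertex with no outgoing edges. -/
def IsSink (o : EdgeOrientation G) (s : V) : Prop :=
  ∀ t, ¬ o.dir s t

/-- The direction relation obtained by reversing all edges incident to `s`. -/
def fireDir (s : V) (d : V → V → Prop) : V → V → Prop :=
  fun u v => ((u = s ∨ v = s) ∧ d v u) ∨ (¬ (u = s ∨ v = s) ∧ d u v)

/-- One sink-firing move on acyclic orientations. -/
def FireStep (o o' : EdgeOrientation G) : Prop :=
  o.Acyclic ∧ ∃ s, o.IsSink s ∧ o'.dir = fireDir s o.dir

/-- Reachability by finite sequences of sink-firing moves. -/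
def Reach (o o' : EdgeOrientation G) : Prop :=
  Relation.ReflTransGen FireStep o o'

/-- `FireSeq o l o'` : starting from `o`, firing the vertices in the list `l` in order
(each of which must be a sink of an acyclic orientation at its turn) yields `o'`. -/
def FireSeq : EdgeOrientation G → List V → EdgeOrientation G → Prop
  | o, [], o' => o = o'
  | o, s :: l, o' =>
      ∃ o₁ : EdgeOrientation G,
        o.Acyclic ∧ o.IsSink s ∧ o₁.dir = fireDir s o.dir ∧ FireSeq o₁ l o'

end EdgeOrientation

/-!
Firing a sink `s` of `o` reverses the edges of the cut between `{s}` and the other vertices, so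
it suffices to show that reversing the cut of a set `F` closed under out-neighbours can be undone
by sink firings. That reversal stays acyclic, and any vertex `m ∉ F` without out-neighbours
outside `F` (one exists as `o` is acyclic and `V` finite) is a sink of it; firing `m` turns it
into the reversal of the cut of `insert m F`, again out-closed. Once `F` is everything, the
reversal is `o` itself.
-/

theorem Relation.TransGen.of_rel_into {α : Type*} {r r' : α → α → Prop} {S : Set α}
    (h : ∀ a b, r' a b → b ∈ S → a ∈ S ∧ r a b) {a b : α} (hab : Relation.TransGen r' a b)
    (hb : b ∈ S) : a ∈ S ∧ Relation.TransGen r a b := by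
  induction hab using Relation.TransGen.head_induction_on with
  | single h' => exact (h _ _ h' hb).imp_right .single
  | head h' _ ih =>
    obtain ⟨hc, hcb⟩ := ih
    exact (h _ _ h' hc).imp_right (.head · hcb)

namespace EdgeOrientation

variable {V : Type*} {G : SimpleGraph V}

@[ext]
theorem ext {o o' : EdgeOrientation G} (h : o.dir = o'.dir) : o = o' := by
  cases o; cases o'; cases h; rfl

def reverseCut (o : EdgeOrientation G) (F : Set V) : EdgeOrientation G where
  dir u v := ((u ∈ F ↔ v ∈ F) ∧ o.dir u v) ∨ (¬(u ∈ F ↔ v ∈ F) ∧ o.dir v u)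
  dir_adj u v h := by
    rcases h with ⟨_, h⟩ | ⟨_, h⟩
    · exact o.dir_adj u v h
    · exact (o.dir_adj v u h).symm
  dir_total u v hadj := by
    have := o.dir_total u v hadj
    have := o.dir_total v u hadj.symm
    tauto

theorem reverseCut_empty (o : EdgeOrientation G) : o.reverseCut ∅ = o := by
  ext u v; simp [reverseCut]

theorem reverseCut_univ (o : EdgeOrientation G) : o.reverseCut Set.univ = o := by
  ext u v; simp [reverseCut]

theorem reverseCut_insert_dir (o : EdgeOrientation G) {F : Set V} {s : V} (hs : s ∉ F) :
    (o.reverseCut (insert s F)).dir = fireDir s (o.reverseCut F).dir := by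
  ext u v
  simp only [reverseCut, fireDir, Set.mem_insert_iff]
  by_cases hu : u = s <;> by_cases hv : v = s <;> subst_vars <;> tauto

def IsOutClosed (o : EdgeOrientation G) (F : Set V) : Prop :=
  ∀ u v, o.dir u v → u ∈ F → v ∈ F

section IsOutClosed

variable {o : EdgeOrientation G} {F : Set V}

theorem IsOutClosed.reverseCut_dir_into (hF : o.IsOutClosed F) {a b : V}
    (h : (o.reverseCut F).dir a b) (hb : b ∈ F) : a ∈ F ∧ o.dir a b := by
  rcases h with ⟨hab, h⟩ | ⟨hab, h⟩
  · exact ⟨hab.mpr hb, h⟩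
  · exact absurd (iff_of_true (hF _ _ h hb) hb) hab

theorem IsOutClosed.reverseCut_dir_out (hF : o.IsOutClosed F) {a b : V}
    (h : (o.reverseCut F).dir a b) (ha : a ∉ F) : b ∉ F ∧ o.dir a b := by
  rcases h with ⟨hab, h⟩ | ⟨hab, h⟩
  · exact ⟨mt hab.mpr ha, h⟩
  · by_cases hb : b ∈ F
    · exact absurd (hF _ _ h hb) ha
    · exact absurd (iff_of_false ha hb) hab

/-- After the reversal all edges of the cut leave `F`, so a directed cycle stays on one side,
where it is a cycle of `o`. -/
theorem IsOutClosed.reverseCut_acyclic (hF : o.IsOutClosed F) (ho : o.Acyclic) :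
    (o.reverseCut F).Acyclic := by
  intro v hv
  by_cases hvF : v ∈ F
  · exact ho v (Relation.TransGen.of_rel_into (fun _ _ => hF.reverseCut_dir_into) hv hvF).2
  · have := Relation.TransGen.of_rel_into (S := Fᶜ) (r := flip o.dir)
      (fun _ _ h => hF.reverseCut_dir_out h) (Relation.transGen_swap.mpr hv) hvF
    exact ho v (Relation.transGen_swap.mp this.2)

theorem IsOutClosed.reverseCut_isSink (hF : o.IsOutClosed F) {v : V} (hv : v ∉ F)
    (hmax : ∀ t ∉ F, ¬ o.dir v t) : (o.reverseCut F).IsSink v := by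
  intro t ht
  obtain ⟨htF, hvt⟩ := hF.reverseCut_dir_out ht hv
  exact hmax t htF hvt

end IsOutClosed

theorem Acyclic.exists_sink_within [Finite V] {o : EdgeOrientation G} (ho : o.Acyclic)
    {S : Set V} (hS : S.Nonempty) : ∃ m ∈ S, ∀ t ∈ S, ¬ o.dir m t := by
  let r : V → V → Prop := flip (Relation.TransGen o.dir)
  have : IsTrans V r := ⟨fun _ _ _ h₁ h₂ => h₂.trans h₁⟩
  have : Std.Irrefl r := ⟨ho⟩
  obtain ⟨m, hm, hmin⟩ := (Finite.wellFounded_of_trans_of_irrefl r).has_min S hS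
  exact ⟨m, hm, fun t ht hmt => hmin t ht (.single hmt)⟩

theorem IsOutClosed.reach_reverseCut [Finite V] {o : EdgeOrientation G} (ho : o.Acyclic)
    {F : Set V} (hF : o.IsOutClosed F) : Reach (o.reverseCut F) o := by
  induction hn : Fᶜ.ncard generalizing F with
  | zero =>
    rw [Set.ncard_eq_zero, Set.compl_empty_iff] at hn
    rw [hn, reverseCut_univ]
    exact .refl
  | succ n ih =>
    obtain ⟨m, hmF, hmax⟩ := ho.exists_sink_within (S := Fᶜ)
      (Set.nonempty_of_ncard_ne_zero (by omega))
    have hF' : o.IsOutClosed (insert m F) := by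
      rintro u v huv (rfl | hu)
      · exact Classical.byContradiction fun hv => hmax v (mt Or.inr hv) huv
      · exact .inr (hF u v huv hu)
    have hn' : (insert m F)ᶜ.ncard = n := by
      rw [show (insert m F)ᶜ = Fᶜ \ {m} by ext; simp [not_or, and_comm],
        Set.ncard_sdiff_singleton_of_mem hmF, hn, Nat.add_sub_cancel]
    have hstep : FireStep (o.reverseCut F) (o.reverseCut (insert m F)) :=
      ⟨hF.reverseCut_acyclic ho, m, hF.reverseCut_isSink hmF hmax,
        o.reverseCut_insert_dir hmF⟩
    exact .head hstep (ih hF' hn')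

theorem FireStep.reach_reverse [Finite V] {o o' : EdgeOrientation G} (h : FireStep o o') :
    Reach o' o := by
  obtain ⟨ho, s, hs, hdir⟩ := h
  have hs' : o.IsOutClosed {s} := by
    rintro u v huv rfl
    exact absurd huv (hs v)
  have ho' : o' = o.reverseCut {s} := by
    ext1
    rw [hdir, ← LawfulSingleton.insert_empty_eq, o.reverseCut_insert_dir (Set.notMem_empty s),
      reverseCut_empty]
  exact ho' ▸ hs'.reach_reverseCut ho

theorem reach_symm [Finite V] {o o' : EdgeOrientation G} (h : Reach o o') : Reach o' o := by
  induction h with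
  | refl => exact .refl
  | tail _ hstep ih => exact hstep.reach_reverse.trans ih

end EdgeOrientation

open EdgeOrientation in
/-- Reachability under sink firing is an equivalence relation on the set of
acyclic edge orientations of a finite graph. -/
theorem reach_equivalence {V : Type*} [Fintype V] (G : SimpleGraph V) :
    Equivalence (fun a b : {o : EdgeOrientation G // o.Acyclic} => Reach a.1 b.1) :=
  ⟨fun _ => .refl, reach_symm, .trans⟩
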